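/- arXiv:1512.08887 — 3 statements merged into one kernel-verified Lean document; each statement's English description precedes it below -/
import Mathlib

section
/- Let R be a p × m random matrix with i.i.d. entries of mean zero, second moment μ₂, fourth moment μ₄, and kurtosis κ = μ₄/μ₂² − 3. Let c_k denote the k-th column of the p × p matrix R Rᵀ. Then E[c_k c_kᵀ] = m μ₂² (κ + m + 1) e_k e_kᵀ + m μ₂² I_{p×p}, where e_k is the k-th canonical basis vector of ℝ^p. -/
/-!
Expanding both entries of `R Rᵀ` gives `E[(R Rᵀ)ᵢₖ (R Rᵀ)ₗₖ] = ∑ⱼ ∑ⱼ' E[Rᵢⱼ Rₖⱼ Rₗⱼ' Rₖⱼ']`.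
For independent centred variables with common second and fourth moments, a mixed fourth moment
`E[X_a X_b X_c X_d]` vanishes as soon as one index occurs only once (factor that variable off by
independence), so only pairings of the indices survive:
`E[X_a X_b X_c X_d] = μ₂² (δ_ab δ_cd + δ_ac δ_bd + δ_ad δ_bc) + (μ₄ - 3 μ₂²) δ_abcd`.
Summing this over `j, j'` gives `m² μ₂² δᵢₖ δₗₖ + m μ₂² δᵢₗ + m μ₂² δᵢₖ δₖₗ + m (μ₄ - 3 μ₂²) δᵢₖ δₖₗ`,
which is the claimed matrix once `μ₄ = (κ + 3) μ₂²`.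
-/

open MeasureTheory ProbabilityTheory Matrix

instance : ENNReal.HolderTriple 4 4 2 := ⟨by
  rw [← two_mul, show (4 : ENNReal) = 2 * 2 by norm_num, ENNReal.mul_inv (by simp) (by simp),
    ← mul_assoc, ENNReal.mul_inv_cancel (by simp) (by simp), one_mul]⟩

section

variable {Ω : Type*} [MeasurableSpace Ω] {μ : Measure Ω}

lemma MeasureTheory.MemLp.integrable_mul_mul_mul {f g h k : Ω → ℝ} (hf : MemLp f 4 μ)
    (hg : MemLp g 4 μ) (hh : MemLp h 4 μ) (hk : MemLp k 4 μ) :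
    Integrable (fun ω => f ω * g ω * h ω * k ω) μ := by
  simpa only [Pi.mul_def, ← mul_assoc] using
    (hg.mul' (r := 2) hf).integrable_mul (hk.mul' (r := 2) hh)

lemma integral_mul_transpose_apply_mul_mul_transpose_apply {n o : Type*} [Fintype o]
    (R : Ω → Matrix n o ℝ) (hR : ∀ i j, MemLp (fun ω => R ω i j) 4 μ) (i k l k' : n) :
    ∫ ω, (R ω * (R ω)ᵀ) i k * (R ω * (R ω)ᵀ) l k' ∂μ
      = ∑ j, ∑ j', ∫ ω, R ω i j * R ω k j * R ω l j' * R ω k' j' ∂μ := by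
  have hint (j j' : o) : Integrable (fun ω => R ω i j * R ω k j * R ω l j' * R ω k' j') μ :=
    (hR i j).integrable_mul_mul_mul (hR k j) (hR l j') (hR k' j')
  simp only [mul_apply, transpose_apply, Finset.sum_mul_sum, ← mul_assoc]
  rw [integral_finsetSum _ fun j _ => integrable_finsetSum _ fun j' _ => hint j j']
  exact Finset.sum_congr rfl fun j _ => integral_finsetSum _ fun j' _ => hint j j'

end

namespace ProbabilityTheory

variable {Ω ι : Type*} [MeasurableSpace Ω] {μ : Measure Ω} {X : ι → Ω → ℝ} {m₂ m₄ : ℝ}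

lemma iIndepFun.integral_mul_mul_mul_eq_zero (hX : iIndepFun X μ) (hm : ∀ i, Measurable (X i))
    {a b c d : ι} (ha : ∫ ω, X a ω ∂μ = 0) (hab : a ≠ b) (hac : a ≠ c) (had : a ≠ d) :
    ∫ ω, X a ω * (X b ω * X c ω * X d ω) ∂μ = 0 := by
  classical
  have hind : IndepFun (X a) (fun ω => X b ω * X c ω * X d ω) μ :=
    (hX.indepFun_finset {a} {b, c, d} (by simp [hab, hac, had]) hm).comp
      (φ := fun v : (i : ({a} : Finset ι)) → ℝ => v ⟨a, by simp⟩)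
      (ψ := fun v : (i : ({b, c, d} : Finset ι)) → ℝ =>
        v ⟨b, by simp⟩ * v ⟨c, by simp⟩ * v ⟨d, by simp⟩) (by fun_prop) (by fun_prop)
  simpa [ha] using hind.integral_mul_eq_mul_integral (hm a).aestronglyMeasurable (by fun_prop)

lemma iIndepFun.integral_sq_mul_sq (hX : iIndepFun X μ) (hm : ∀ i, Measurable (X i))
    {a b : ι} (hab : a ≠ b) :
    ∫ ω, X a ω ^ 2 * X b ω ^ 2 ∂μ = (∫ ω, X a ω ^ 2 ∂μ) * ∫ ω, X b ω ^ 2 ∂μ :=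
  ((hX.indepFun hab).comp (measurable_id.pow_const 2)
    (measurable_id.pow_const 2)).integral_mul_eq_mul_integral (by fun_prop) (by fun_prop)

lemma iIndepFun.integral_sq_mul_sq_eq_ite [DecidableEq ι] (hX : iIndepFun X μ)
    (hm : ∀ i, Measurable (X i)) (h2 : ∀ i, ∫ ω, X i ω ^ 2 ∂μ = m₂)
    (h4 : ∀ i, ∫ ω, X i ω ^ 4 ∂μ = m₄) (a b : ι) :
    ∫ ω, X a ω ^ 2 * X b ω ^ 2 ∂μ = if a = b then m₄ else m₂ ^ 2 := by
  split_ifs with hab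
  · simp_rw [hab, ← pow_add, h4]
  · rw [hX.integral_sq_mul_sq hm hab, h2, h2, sq]

theorem iIndepFun.integral_mul_mul_mul [DecidableEq ι] (hX : iIndepFun X μ)
    (hm : ∀ i, Measurable (X i)) (hmean : ∀ i, ∫ ω, X i ω ∂μ = 0)
    (h2 : ∀ i, ∫ ω, X i ω ^ 2 ∂μ = m₂) (h4 : ∀ i, ∫ ω, X i ω ^ 4 ∂μ = m₄) (a b c d : ι) :
    ∫ ω, X a ω * X b ω * X c ω * X d ω ∂μ =
      (if a = b ∧ c = d then m₂ ^ 2 else 0) + (if a = c ∧ b = d then m₂ ^ 2 else 0)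
        + (if a = d ∧ b = c then m₂ ^ 2 else 0)
        + (if a = b ∧ b = c ∧ c = d then m₄ - 3 * m₂ ^ 2 else 0) := by
  have lone {x y z w : ι}
      (hprod : ∀ ω, X a ω * X b ω * X c ω * X d ω = X x ω * (X y ω * X z ω * X w ω))
      (hxy : x ≠ y) (hxz : x ≠ z) (hxw : x ≠ w) : ∫ ω, X a ω * X b ω * X c ω * X d ω ∂μ = 0 := by
    simp_rw [hprod]
    exact hX.integral_mul_mul_mul_eq_zero hm (hmean x) hxy hxz hxw
  have paired {x y : ι} (hprod : ∀ ω, X a ω * X b ω * X c ω * X d ω = X x ω ^ 2 * X y ω ^ 2) :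
      ∫ ω, X a ω * X b ω * X c ω * X d ω ∂μ = if x = y then m₄ else m₂ ^ 2 := by
    simp_rw [hprod]
    exact hX.integral_sq_mul_sq_eq_ite hm h2 h4 x y
  by_cases ha : a ≠ b ∧ a ≠ c ∧ a ≠ d
  · rw [lone (fun ω => by ring) ha.1 ha.2.1 ha.2.2]; grind
  by_cases hb : b ≠ a ∧ b ≠ c ∧ b ≠ d
  · rw [lone (fun ω => by ring) hb.1 hb.2.1 hb.2.2]; grind
  by_cases hc : c ≠ a ∧ c ≠ b ∧ c ≠ d
  · rw [lone (fun ω => by ring) hc.1 hc.2.1 hc.2.2]; grind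
  by_cases hd : d ≠ a ∧ d ≠ b ∧ d ≠ c
  · rw [lone (fun ω => by ring) hd.1 hd.2.1 hd.2.2]; grind
  obtain ⟨rfl, rfl⟩ | ⟨rfl, rfl⟩ | ⟨rfl, rfl⟩ :
      (a = b ∧ c = d) ∨ (a = c ∧ b = d) ∨ (a = d ∧ b = c) := by grind
  · rw [paired (x := a) (y := c) (fun ω => by ring)]; grind
  · rw [paired (x := a) (y := b) (fun ω => by ring)]; grind
  · rw [paired (x := a) (y := b) (fun ω => by ring)]; grind

end ProbabilityTheory

theorem expectation_column_outer_self_general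
    {Ω : Type*} [MeasureSpace Ω] [IsProbabilityMeasure (ℙ : Measure Ω)]
    {p m : ℕ} (R : Ω → Matrix (Fin p) (Fin m) ℝ)
    (hmeas : ∀ i j, Measurable (fun ω => R ω i j))
    (hindep : iIndepFun (m := fun _ : Fin p × Fin m => Real.measurableSpace)
      (fun q ω => R ω q.1 q.2) ℙ)
    (hL4 : ∀ i j, MemLp (fun ω => R ω i j) 4 ℙ)
    (μ2 μ4 κ : ℝ) (hμ2 : 0 < μ2) (hκ : κ = μ4 / μ2 ^ 2 - 3)
    (hmean : ∀ i j, ∫ ω, R ω i j ∂ℙ = 0)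
    (h2 : ∀ i j, ∫ ω, (R ω i j) ^ 2 ∂ℙ = μ2)
    (h4 : ∀ i j, ∫ ω, (R ω i j) ^ 4 ∂ℙ = μ4)
    (k : Fin p) :
    (Matrix.of fun i l => ∫ ω, (R ω * (R ω)ᵀ) i k * (R ω * (R ω)ᵀ) l k ∂ℙ)
      = ((m : ℝ) * μ2 ^ 2 * (κ + m + 1)) • Matrix.single k k (1 : ℝ)
        + ((m : ℝ) * μ2 ^ 2) • (1 : Matrix (Fin p) (Fin p) ℝ) := by
  ext i l
  have hmoment (j j' : Fin m) := hindep.integral_mul_mul_mul (fun q => hmeas q.1 q.2)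
    (fun q => hmean q.1 q.2) (fun q => h2 q.1 q.2) (fun q => h4 q.1 q.2)
    (i, j) (k, j) (l, j') (k, j')
  simp only [Prod.mk.injEq, and_true, true_and] at hmoment
  rw [of_apply, integral_mul_transpose_apply_mul_mul_transpose_apply R hL4]
  simp only [hmoment, Matrix.add_apply, Matrix.smul_apply, single_apply, one_apply, smul_eq_mul]
  obtain rfl | hik := eq_or_ne i k
  · obtain rfl | hli := eq_or_ne l i
    · simp only [and_self, ↓reduceIte, true_and, and_true, Finset.sum_add_distrib,
        Finset.sum_const, Finset.card_univ, Fintype.card_fin, nsmul_eq_mul, Finset.sum_ite_eq,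
        Finset.mem_univ, mul_one]
      rw [hκ]
      field_simp
      ring
    · simp [hli, hli.symm]
  · obtain rfl | hil := eq_or_ne i l
    · simp [hik, hik.symm]
    · simp [hik, hik.symm, hil]

/-- For a `p × m` random matrix `R` with i.i.d. mean-zero entries with
second moment `μ2 > 0`, fourth moment `μ4`, and kurtosis `κ = μ4/μ2² − 3`, the `k`-th
column `c_k` of `R Rᵀ` satisfies
`E[c_k c_kᵀ] = m μ2² (κ + m + 1) e_k e_kᵀ + m μ2² I`. -/
theorem expectation_column_outer_self
    {Ω : Type*} [MeasureSpace Ω] [IsProbabilityMeasure (ℙ : Measure Ω)]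
    {p m : ℕ} (R : Ω → Matrix (Fin p) (Fin m) ℝ)
    (hmeas : ∀ i j, Measurable (fun ω => R ω i j))
    (hindep : iIndepFun (m := fun _ : Fin p × Fin m => Real.measurableSpace)
      (fun q ω => R ω q.1 q.2) ℙ)
    (hid : ∀ i j i' j', IdentDistrib (fun ω => R ω i j) (fun ω => R ω i' j') ℙ ℙ)
    (hL4 : ∀ i j, MemLp (fun ω => R ω i j) 4 ℙ)
    (μ2 μ4 κ : ℝ) (hμ2 : 0 < μ2) (hκ : κ = μ4 / μ2 ^ 2 - 3)
    (hmean : ∀ i j, ∫ ω, R ω i j ∂ℙ = 0)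
    (h2 : ∀ i j, ∫ ω, (R ω i j) ^ 2 ∂ℙ = μ2)
    (h4 : ∀ i j, ∫ ω, (R ω i j) ^ 4 ∂ℙ = μ4)
    (k : Fin p) :
    (Matrix.of fun i l => ∫ ω, (R ω * (R ω)ᵀ) i k * (R ω * (R ω)ᵀ) l k ∂ℙ)
      = ((m : ℝ) * μ2 ^ 2 * (κ + m + 1)) • Matrix.single k k (1 : ℝ)
        + ((m : ℝ) * μ2 ^ 2) • (1 : Matrix (Fin p) (Fin p) ℝ) :=
  expectation_column_outer_self_general R hmeas hindep hL4 μ2 μ4 κ hμ2 hκ hmean h2 h4 k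
end

section
/- Let R be a p × m random matrix with i.i.d. entries of mean zero, second moment μ₂ > 0, fourth moment μ₄, and kurtosis κ = μ₄/μ₂² − 3. Then for any fixed vector x ∈ ℝ^p, E[R Rᵀ x xᵀ R Rᵀ] = (m² + m) μ₂² x xᵀ + κ m μ₂² diag(x xᵀ) + m μ₂² ‖x‖₂² I_{p×p}, where diag(M) zeroes all off-diagonal entries of M. -/
open MeasureTheory ProbabilityTheory Matrix

/-!
With `y = R Rᵀ x` the matrix in question is `E[y yᵀ]`, and
`y_a y_b = ∑ x_c x_d R_ak R_ck R_bl R_dl`. For centred i.i.d. entries a mixed fourth moment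
vanishes as soon as one index occurs only once, so it equals
`μ₂² (δ_ij δ_kl + δ_ik δ_jl + δ_il δ_jk) + (μ₄ - 3 μ₂²) δ_ijkl`. Summed against `x_c x_d`, the
pairing inside each factor of `y` gives `m² x xᵀ`, the two cross pairings give `m x xᵀ` and
`m ‖x‖² I`, and the cumulant term gives `κ m μ₂² diag(x xᵀ)`.
-/

section FourthMoment

variable {Ω ι : Type*} [MeasurableSpace Ω] {μ : Measure Ω} {f : ι → Ω → ℝ}

def iidFourthMoment [DecidableEq ι] (μ2 μ4 : ℝ) (i j k l : ι) : ℝ :=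
  μ2 ^ 2 * ((if i = j ∧ k = l then 1 else 0) + (if i = k ∧ j = l then 1 else 0)
      + (if i = l ∧ j = k then 1 else 0))
    + (μ4 - 3 * μ2 ^ 2) * (if i = j ∧ j = k ∧ k = l then 1 else 0)

lemma integrable_mul_mul_mul_of_memLp_four (hf : ∀ i, MemLp (f i) 4 μ) (i j k l : ι) :
    Integrable (fun ω => f i ω * f j ω * f k ω * f l ω) μ := by
  have h := MemLp.prod' (s := Finset.univ) (f := ![f i, f j, f k, f l]) (p := fun _ => 4)
    (μ := μ) (fun n _ => by fin_cases n <;> exact hf _)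
  have hexp : (∑ _n : Fin 4, (4 : ENNReal)⁻¹)⁻¹ = 1 := by
    simp [ENNReal.mul_inv_cancel]
  rw [hexp, memLp_one_iff_integrable] at h
  simpa [Fin.prod_univ_four, mul_assoc] using h

lemma integral_mul_mul_mul_eq_zero_of_ne [DecidableEq ι] (hindep : iIndepFun f μ)
    (hmeas : ∀ i, Measurable (f i)) {e : ι} (hmean : ∫ ω, f e ω ∂μ = 0) {i j k : ι}
    (hi : i ≠ e) (hj : j ≠ e) (hk : k ≠ e) :
    ∫ ω, f i ω * f j ω * f k ω * f e ω ∂μ = 0 := by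
  have hdisj : Disjoint ({i, j, k} : Finset ι) {e} := by simp [hi.symm, hj.symm, hk.symm]
  have hind : IndepFun (fun ω => f i ω * f j ω * f k ω) (f e) μ :=
    (hindep.indepFun_finset _ _ hdisj hmeas).comp
      (φ := fun v : ({i, j, k} : Finset ι) → ℝ => v ⟨i, by simp⟩ * v ⟨j, by simp⟩ * v ⟨k, by simp⟩)
      (ψ := fun v : ({e} : Finset ι) → ℝ => v ⟨e, by simp⟩) (by fun_prop) (by fun_prop)
  rw [hind.integral_fun_mul_eq_mul_integral (by fun_prop) (hmeas e).aestronglyMeasurable, hmean,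
    mul_zero]

lemma integral_sq_mul_sq_of_ne (hindep : iIndepFun f μ) (hmeas : ∀ i, Measurable (f i))
    {i j : ι} (hij : i ≠ j) :
    ∫ ω, f i ω ^ 2 * f j ω ^ 2 ∂μ = (∫ ω, f i ω ^ 2 ∂μ) * ∫ ω, f j ω ^ 2 ∂μ :=
  ((hindep.indepFun hij).comp (φ := fun x => x ^ 2) (ψ := fun x => x ^ 2) (by fun_prop)
    (by fun_prop)).integral_fun_mul_eq_mul_integral (by fun_prop) (by fun_prop)

lemma integral_mul_mul_mul_eq_iidFourthMoment [DecidableEq ι] (hindep : iIndepFun f μ)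
    (hmeas : ∀ i, Measurable (f i)) {μ2 μ4 : ℝ} (hmean : ∀ i, ∫ ω, f i ω ∂μ = 0)
    (h2 : ∀ i, ∫ ω, f i ω ^ 2 ∂μ = μ2) (h4 : ∀ i, ∫ ω, f i ω ^ 4 ∂μ = μ4) (a b c d : ι) :
    ∫ ω, f a ω * f b ω * f c ω * f d ω ∂μ = iidFourthMoment μ2 μ4 a b c d := by
  have single {i j k e : ι} (hi : i ≠ e) (hj : j ≠ e) (hk : k ≠ e) :
      ∫ ω, f i ω * f j ω * f k ω * f e ω ∂μ = 0 :=
    integral_mul_mul_mul_eq_zero_of_ne hindep hmeas (hmean e) hi hj hk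
  have pair {i j : ι} (hij : i ≠ j) : ∫ ω, f i ω ^ 2 * f j ω ^ 2 ∂μ = μ2 ^ 2 := by
    rw [integral_sq_mul_sq_of_ne hindep hmeas hij, h2, h2, sq]
  unfold iidFourthMoment
  rcases eq_or_ne a b with rfl | hab
  · rcases eq_or_ne c d with rfl | hcd
    · rcases eq_or_ne a c with rfl | hac
      · rw [show (fun ω => f a ω * f a ω * f a ω * f a ω) = fun ω => f a ω ^ 4 by ext; ring, h4]
        simp only [and_self, if_true]
        ring
      · rw [show (fun ω => f a ω * f a ω * f c ω * f c ω) = fun ω => f a ω ^ 2 * f c ω ^ 2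
          by ext; ring, pair hac]
        simp [hac]
    · rcases eq_or_ne c a with rfl | hca
      · simp [hcd, single hcd hcd hcd]
      · rw [show (fun ω => f a ω * f a ω * f c ω * f d ω) = fun ω => f a ω * f a ω * f d ω * f c ω
          by ext; ring, single hca.symm hca.symm hcd.symm]
        simp [hcd, hca.symm]
  · rcases eq_or_ne a c with rfl | hac
    · rcases eq_or_ne b d with rfl | hbd
      · rw [show (fun ω => f a ω * f b ω * f a ω * f b ω) = fun ω => f a ω ^ 2 * f b ω ^ 2
          by ext; ring, pair hab]
        simp [hab]
      · rw [show (fun ω => f a ω * f b ω * f a ω * f d ω) = fun ω => f a ω * f a ω * f d ω * f b ω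
          by ext; ring, single hab hab hbd.symm]
        simp [hab, hab.symm, hbd]
    · rcases eq_or_ne a d with rfl | had
      · rcases eq_or_ne b c with rfl | hbc
        · rw [show (fun ω => f a ω * f b ω * f b ω * f a ω) = fun ω => f a ω ^ 2 * f b ω ^ 2
            by ext; ring, pair hab]
          simp [hab]
        · rw [show (fun ω => f a ω * f b ω * f c ω * f a ω) = fun ω => f a ω * f b ω * f a ω * f c ω
            by ext; ring, single hac hbc hac]
          simp [hab, hac, hbc]
      · rw [show (fun ω => f a ω * f b ω * f c ω * f d ω) = fun ω => f b ω * f c ω * f d ω * f a ω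
          by ext; ring, single hab.symm hac.symm had.symm]
        simp [hab, hac, had]

end FourthMoment

section MatrixAlgebra

variable {n k R : Type*} [Fintype n] [Fintype k] [CommSemiring R]

lemma mul_transpose_mul_vecMulVec_mul_mul_transpose (A : Matrix n k R) (x : n → R) :
    A * Aᵀ * vecMulVec x x * (A * Aᵀ) = vecMulVec (A *ᵥ (Aᵀ *ᵥ x)) (A *ᵥ (Aᵀ *ᵥ x)) := by
  rw [mul_vecMulVec, vecMulVec_mul, ← mulVec_transpose, transpose_mul, transpose_transpose,
    mulVec_mulVec]

lemma mulVec_transpose_mulVec_apply (A : Matrix n k R) (x : n → R) (a : n) :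
    (A *ᵥ (Aᵀ *ᵥ x)) a = ∑ q : k × n, x q.2 * (A a q.1 * A q.2 q.1) := by
  simp only [mulVec, dotProduct, transpose_apply, Finset.mul_sum, Fintype.sum_prod_type]
  exact Finset.sum_congr rfl fun _ _ => Finset.sum_congr rfl fun _ _ => by ring

end MatrixAlgebra

lemma sum_sum_mul_iidFourthMoment {n k : Type*} [Fintype n] [Fintype k] [DecidableEq n]
    [DecidableEq k] (x : n → ℝ) (a b : n) (μ2 μ4 : ℝ) :
    ∑ q : k × n, ∑ q' : k × n,
        x q.2 * x q'.2 * iidFourthMoment μ2 μ4 (a, q.1) (q.2, q.1) (b, q'.1) (q'.2, q'.1)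
      = ((Fintype.card k ^ 2 + Fintype.card k) * μ2 ^ 2) * (x a * x b)
        + ((μ4 - 3 * μ2 ^ 2) * Fintype.card k) * (if a = b then x a ^ 2 else 0)
        + (Fintype.card k * μ2 ^ 2 * ∑ i, x i ^ 2) * (if a = b then 1 else 0) := by
  simp only [iidFourthMoment, Fintype.sum_prod_type, Prod.mk.injEq, and_true, mul_add,
    Finset.sum_add_distrib, mul_ite, mul_one, mul_zero, ite_and, Finset.sum_ite_irrel,
    Finset.sum_ite_eq, Finset.mem_univ, ↓reduceIte, Finset.sum_const_zero, Finset.sum_const,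
    Finset.card_univ, nsmul_eq_mul, eq_comm]
  split_ifs with hab
  · subst hab
    simp only [← Finset.sum_mul, sq]
    ring
  · ring

lemma integral_mulVec_transpose_mulVec_mul {Ω n k : Type*} [MeasurableSpace Ω] {μ : Measure Ω}
    [Fintype n] [Fintype k] (A : Ω → Matrix n k ℝ) (hA : ∀ i j, MemLp (fun ω => A ω i j) 4 μ)
    (x : n → ℝ) (a b : n) :
    ∫ ω, (A ω *ᵥ ((A ω)ᵀ *ᵥ x)) a * (A ω *ᵥ ((A ω)ᵀ *ᵥ x)) b ∂μ
      = ∑ q : k × n, ∑ q' : k × n, x q.2 * x q'.2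
          * ∫ ω, A ω a q.1 * A ω q.2 q.1 * A ω b q'.1 * A ω q'.2 q'.1 ∂μ := by
  have hint := integrable_mul_mul_mul_of_memLp_four (f := fun q : n × k => fun ω => A ω q.1 q.2)
    (fun q => hA q.1 q.2)
  have hterm (q q' : k × n) : Integrable (fun ω => x q.2 * (A ω a q.1 * A ω q.2 q.1)
      * (x q'.2 * (A ω b q'.1 * A ω q'.2 q'.1))) μ := by
    refine ((hint (a, q.1) (q.2, q.1) (b, q'.1) (q'.2, q'.1)).const_mul (x q.2 * x q'.2)).congr ?_
    filter_upwards with ω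
    ring
  simp only [mulVec_transpose_mulVec_apply, Finset.sum_mul_sum]
  rw [integral_finsetSum _ fun q _ => integrable_finsetSum _ fun q' _ => hterm q q']
  refine Finset.sum_congr rfl fun q _ => ?_
  rw [integral_finsetSum _ fun q' _ => hterm q q']
  refine Finset.sum_congr rfl fun q' _ => ?_
  rw [← integral_const_mul]
  congr 1
  ext ω
  ring

theorem expectation_RRt_xxt_RRt_general
    {Ω : Type*} [MeasureSpace Ω]
    {p m : ℕ} (R : Ω → Matrix (Fin p) (Fin m) ℝ)
    (hmeas : ∀ i j, Measurable (fun ω => R ω i j))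
    (hindep : iIndepFun
      (fun (q : Fin p × Fin m) ω => R ω q.1 q.2) ℙ)
    (hL4 : ∀ i j, MemLp (fun ω => R ω i j) 4 ℙ)
    (μ2 μ4 κ : ℝ) (hμ2 : 0 < μ2) (hκ : κ = μ4 / μ2 ^ 2 - 3)
    (hmean : ∀ i j, ∫ ω, R ω i j ∂ℙ = 0)
    (h2 : ∀ i j, ∫ ω, (R ω i j) ^ 2 ∂ℙ = μ2)
    (h4 : ∀ i j, ∫ ω, (R ω i j) ^ 4 ∂ℙ = μ4)
    (x : Fin p → ℝ) :
    (Matrix.of fun i j =>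
        ∫ ω, (R ω * (R ω)ᵀ * Matrix.vecMulVec x x * (R ω * (R ω)ᵀ)) i j ∂ℙ)
      = (((m : ℝ) ^ 2 + m) * μ2 ^ 2) • Matrix.vecMulVec x x
        + (κ * m * μ2 ^ 2) • Matrix.diagonal (fun i => x i ^ 2)
        + ((m : ℝ) * μ2 ^ 2 * ∑ i, x i ^ 2) • (1 : Matrix (Fin p) (Fin p) ℝ) := by
  have hcumulant : μ4 - 3 * μ2 ^ 2 = κ * μ2 ^ 2 := by
    rw [hκ]
    field_simp
  have hmoment (a c b d : Fin p) (k l : Fin m) :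
      ∫ ω, R ω a k * R ω c k * R ω b l * R ω d l =
        iidFourthMoment μ2 μ4 (a, k) (c, k) (b, l) (d, l) :=
    integral_mul_mul_mul_eq_iidFourthMoment hindep (fun q => hmeas q.1 q.2)
      (fun q => hmean q.1 q.2) (fun q => h2 q.1 q.2) (fun q => h4 q.1 q.2)
      (a, k) (c, k) (b, l) (d, l)
  ext a b
  simp only [of_apply, mul_transpose_mul_vecMulVec_mul_mul_transpose, vecMulVec_apply,
    integral_mulVec_transpose_mulVec_mul R hL4, hmoment, sum_sum_mul_iidFourthMoment, hcumulant,
    Matrix.add_apply, Matrix.smul_apply, diagonal_apply, one_apply, smul_eq_mul, Fintype.card_fin]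
  ring

/-- For a `p × m` random matrix `R` with i.i.d. mean-zero entries with
second moment `μ2 > 0`, fourth moment `μ4`, kurtosis `κ = μ4/μ2² − 3`, and any fixed
`x ∈ ℝ^p`,
`E[R Rᵀ x xᵀ R Rᵀ] = (m² + m) μ2² x xᵀ + κ m μ2² diag(x xᵀ) + m μ2² ‖x‖² I`. -/
theorem expectation_RRt_xxt_RRt
    {Ω : Type*} [MeasureSpace Ω] [IsProbabilityMeasure (ℙ : Measure Ω)]
    {p m : ℕ} (R : Ω → Matrix (Fin p) (Fin m) ℝ)
    (hmeas : ∀ i j, Measurable (fun ω => R ω i j))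
    (hindep : iIndepFun
      (fun (q : Fin p × Fin m) ω => R ω q.1 q.2) ℙ)
    (hid : ∀ i j i' j', IdentDistrib (fun ω => R ω i j) (fun ω => R ω i' j') ℙ ℙ)
    (hL4 : ∀ i j, MemLp (fun ω => R ω i j) 4 ℙ)
    (μ2 μ4 κ : ℝ) (hμ2 : 0 < μ2) (hκ : κ = μ4 / μ2 ^ 2 - 3)
    (hmean : ∀ i j, ∫ ω, R ω i j ∂ℙ = 0)
    (h2 : ∀ i j, ∫ ω, (R ω i j) ^ 2 ∂ℙ = μ2)
    (h4 : ∀ i j, ∫ ω, (R ω i j) ^ 4 ∂ℙ = μ4)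
    (x : Fin p → ℝ) :
    (Matrix.of fun i j =>
        ∫ ω, (R ω * (R ω)ᵀ * Matrix.vecMulVec x x * (R ω * (R ω)ᵀ)) i j ∂ℙ)
      = (((m : ℝ) ^ 2 + m) * μ2 ^ 2) • Matrix.vecMulVec x x
        + (κ * m * μ2 ^ 2) • Matrix.diagonal (fun i => x i ^ 2)
        + ((m : ℝ) * μ2 ^ 2 * ∑ i, x i ^ 2) • (1 : Matrix (Fin p) (Fin p) ℝ) :=
  expectation_RRt_xxt_RRt_general R hmeas hindep hL4 μ2 μ4 κ hμ2 hκ hmean h2 h4 x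
end

section
/- Let Ĉ be a p × p random matrix with E[Ĉ] = C + (κ/(m+1)) diag(C) + (1/(m+1)) tr(C) I for a fixed p × p matrix C, where m ≥ 1 and κ > −(m+1). Define α₁ = (κ/(m+1))/(1 + κ/(m+1)) and α₂ = 1/((1 + κ/(m+1))(m + 1 + κ + p)), and Σ̂ = Ĉ − α₁ diag(Ĉ) − α₂ tr(Ĉ) I. Then E[Σ̂] = C, i.e., Σ̂ is an unbiased estimator of C. -/
/-!
Both maps in play are linear in the matrix: the bias `C ↦ C + c diag(C) + t tr(C) I` and the
correction `M ↦ M − a diag(M) − b tr(M) I`. Expectation commutes with the correction, so it suffices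
to check that the correction inverts the bias. On `C + c diag(C) + t tr(C) I` the diagonal part is
`(1 + c) diag(C) + t tr(C) I` and the trace is `(1 + c + p t) tr(C)`; matching the coefficients of
`diag(C)` and `I` forces `a = c / (1 + c)` and `b = t / ((1 + c)(1 + c + p t))`.
-/

open MeasureTheory ProbabilityTheory Matrix

namespace Matrix

variable {n K : Type*}

lemma diagonal_diag_add_smul_diagonal_add_smul_one [DecidableEq n] [Semiring K]
    (C : Matrix n n K) (c s : K) :
    diagonal (fun i => (C + c • diagonal (fun i => C i i) + s • 1) i i)
      = (1 + c) • diagonal (fun i => C i i) + s • 1 := by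
  ext i j
  by_cases h : i = j
  · subst h; simp [add_mul]
  · simp [h]

lemma trace_add_smul_diagonal_add_smul_one [Fintype n] [DecidableEq n] [CommSemiring K]
    (C : Matrix n n K) (c s : K) :
    trace (C + c • diagonal (fun i => C i i) + s • 1) = (1 + c) * trace C + Fintype.card n * s := by
  simp only [trace_add, trace_smul, trace_diagonal, trace_one, smul_eq_mul]
  rw [show ∑ i, C i i = trace C from rfl]
  ring

def debias [Fintype n] [DecidableEq n] [Ring K] (a b : K) (M : Matrix n n K) : Matrix n n K :=
  M - a • diagonal (fun i => M i i) - (b * trace M) • 1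

lemma debias_add_smul_diagonal_add_smul_one [Fintype n] [DecidableEq n] [Field K]
    (C : Matrix n n K) {a b c t : K}
    (hc : 1 + c ≠ 0) (hct : 1 + c + t * Fintype.card n ≠ 0)
    (ha : a = c / (1 + c)) (hb : b = t / ((1 + c) * (1 + c + t * Fintype.card n))) :
    debias a b (C + c • diagonal (fun i => C i i) + (t * trace C) • 1) = C := by
  rw [debias, diagonal_diag_add_smul_diagonal_add_smul_one,
    trace_add_smul_diagonal_add_smul_one]
  subst ha hb
  match_scalars <;> field_simp <;> ring

section Expectation

variable [Fintype n] {Ω : Type*} [MeasurableSpace Ω] {μ : Measure Ω} {A : Ω → Matrix n n ℝ}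

lemma integrable_trace (hA : ∀ i j, Integrable (fun ω => A ω i j) μ) :
    Integrable (fun ω => trace (A ω)) μ :=
  integrable_finsetSum _ fun i _ => hA i i

lemma integral_trace (hA : ∀ i j, Integrable (fun ω => A ω i j) μ) :
    ∫ ω, trace (A ω) ∂μ = trace (of fun i j => ∫ ω, A ω i j ∂μ) :=
  integral_finsetSum _ fun i _ => hA i i

lemma integral_debias [DecidableEq n] (hA : ∀ i j, Integrable (fun ω => A ω i j) μ) (a b : ℝ) :
    (of fun i j => ∫ ω, debias a b (A ω) i j ∂μ)
      = debias a b (of fun i j => ∫ ω, A ω i j ∂μ) := by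
  ext i j
  by_cases h : i = j
  · subst h
    simp only [debias, of_apply, sub_apply, smul_apply, diagonal_apply_eq, one_apply_eq,
      smul_eq_mul, mul_one]
    have hdiag : Integrable (fun ω => A ω i i - a * A ω i i) μ := (hA i i).sub ((hA i i).const_mul a)
    rw [integral_sub hdiag ((integrable_trace hA).const_mul b),
      integral_sub (hA i i) ((hA i i).const_mul a), integral_const_mul, integral_const_mul,
      integral_trace hA]
  · simp [debias, h]

end Expectation

end Matrix

theorem unbiased_compressive_covariance_estimator_general
    {Ω : Type*} [MeasureSpace Ω]
    {p : ℕ} (m : ℕ) (κ : ℝ) (hκ : -((m : ℝ) + 1) < κ)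
    (C : Matrix (Fin p) (Fin p) ℝ)
    (Chat : Ω → Matrix (Fin p) (Fin p) ℝ)
    (hInt : ∀ i j, Integrable (fun ω => Chat ω i j) ℙ)
    (hexp : (Matrix.of fun i j => ∫ ω, Chat ω i j ∂ℙ)
      = C + (κ / (m + 1)) • Matrix.diagonal (fun i => C i i)
        + ((m + 1 : ℝ)⁻¹ * Matrix.trace C) • (1 : Matrix (Fin p) (Fin p) ℝ))
    (α₁ α₂ : ℝ)
    (hα₁ : α₁ = (κ / (m + 1)) / (1 + κ / (m + 1)))
    (hα₂ : α₂ = 1 / ((1 + κ / (m + 1)) * ((m : ℝ) + 1 + κ + p)))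
    (Sigmahat : Ω → Matrix (Fin p) (Fin p) ℝ)
    (hSigma : ∀ ω, Sigmahat ω = Chat ω - α₁ • Matrix.diagonal (fun a => Chat ω a a)
        - (α₂ * Matrix.trace (Chat ω)) • (1 : Matrix (Fin p) (Fin p) ℝ)) :
    (Matrix.of fun i j => ∫ ω, Sigmahat ω i j ∂ℙ) = C := by
  have hm : (0 : ℝ) < m + 1 := by positivity
  have hc : 0 < 1 + κ / (m + 1) := by
    have : -1 < κ / (m + 1) := by rw [lt_div_iff₀ hm]; linarith
    linarith
  have hct : 1 + κ / (m + 1) + (m + 1 : ℝ)⁻¹ * Fintype.card (Fin p) ≠ 0 := by positivity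
  have hα₂' : α₂ = (m + 1 : ℝ)⁻¹ /
      ((1 + κ / (m + 1)) * (1 + κ / (m + 1) + (m + 1 : ℝ)⁻¹ * Fintype.card (Fin p))) := by
    rw [hα₂, Fintype.card_fin]
    field_simp
  have hSigma' : Sigmahat = fun ω => debias α₁ α₂ (Chat ω) := funext hSigma
  rw [hSigma', integral_debias hInt, hexp]
  exact debias_add_smul_diagonal_add_smul_one C hc.ne' hct hα₁ hα₂'

/-- debiasing the compressive covariance estimator. If `Ĉ` has entrywise
expectation `C + (κ/(m+1)) diag(C) + (1/(m+1)) tr(C) I`, then with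
`α₁ = (κ/(m+1))/(1 + κ/(m+1))` and `α₂ = 1/((1 + κ/(m+1))(m + 1 + κ + p))`, the matrix
`Σ̂ = Ĉ − α₁ diag(Ĉ) − α₂ tr(Ĉ) I` is an unbiased estimator of `C`: `E[Σ̂] = C`. -/
theorem unbiased_compressive_covariance_estimator
    {Ω : Type*} [MeasureSpace Ω] [IsProbabilityMeasure (ℙ : Measure Ω)]
    {p : ℕ} (m : ℕ) (hm : 1 ≤ m) (κ : ℝ) (hκ : -((m : ℝ) + 1) < κ)
    (C : Matrix (Fin p) (Fin p) ℝ)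
    (Chat : Ω → Matrix (Fin p) (Fin p) ℝ)
    (hInt : ∀ i j, Integrable (fun ω => Chat ω i j) ℙ)
    (hexp : (Matrix.of fun i j => ∫ ω, Chat ω i j ∂ℙ)
      = C + (κ / (m + 1)) • Matrix.diagonal (fun i => C i i)
        + ((m + 1 : ℝ)⁻¹ * Matrix.trace C) • (1 : Matrix (Fin p) (Fin p) ℝ))
    (α₁ α₂ : ℝ)
    (hα₁ : α₁ = (κ / (m + 1)) / (1 + κ / (m + 1)))
    (hα₂ : α₂ = 1 / ((1 + κ / (m + 1)) * ((m : ℝ) + 1 + κ + p)))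
    (Sigmahat : Ω → Matrix (Fin p) (Fin p) ℝ)
    (hSigma : ∀ ω, Sigmahat ω = Chat ω - α₁ • Matrix.diagonal (fun a => Chat ω a a)
        - (α₂ * Matrix.trace (Chat ω)) • (1 : Matrix (Fin p) (Fin p) ℝ)) :
    (Matrix.of fun i j => ∫ ω, Sigmahat ω i j ∂ℙ) = C :=
  unbiased_compressive_covariance_estimator_general m κ hκ C Chat hInt hexp α₁ α₂ hα₁ hα₂ Sigmahat
    hSigma
end
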